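/- For every b > 0 and r > 0, the function f_r(t) = 1/(b + t) − t e^{-2rt/b}/(b + t)² is nonincreasing in t on (0, ∞) and satisfies f_r(t) ≥ 0 for all t > 0, with f_r(t) → 0 as t → ∞. -/

import Mathlib

/-!
With `R = 2rt/b`, the derivative is `f'(t) = (((R + 1) e^{-R} - 1)(b + t) - 2b e^{-R}) / (b + t)³`,
and `(R + 1) e^{-R} ≤ 1` (that is, `R + 1 ≤ e^R`) makes it negative, so `f` is strictly decreasing.
For `r ≥ 0` we have `e^{-R} ≤ 1`, hence `0 ≤ f(t) ≤ 1/(b + t)`, which gives nonnegativity and the limit.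
-/

open Real Filter

noncomputable def f (b r t : ℝ) : ℝ := 1 / (b + t) - t * Real.exp (-(2 * r * t / b)) / (b + t) ^ 2

theorem add_one_mul_exp_neg_le_one (x : ℝ) : (x + 1) * exp (-x) ≤ 1 :=
  calc (x + 1) * exp (-x) ≤ exp x * exp (-x) := by gcongr; exact add_one_le_exp x
    _ = 1 := by rw [← exp_add, add_neg_cancel, exp_zero]

theorem hasDerivAt_f {b t : ℝ} (r : ℝ) (hb : b ≠ 0) (hbt : b + t ≠ 0) :
    HasDerivAt (f b r)
      ((((2 * r * t / b + 1) * exp (-(2 * r * t / b)) - 1) * (b + t) - 2 * b * exp (-(2 * r * t / b)))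
        / (b + t) ^ 3) t := by
  have hexp : HasDerivAt (fun t ↦ exp (-(2 * r * t / b))) (exp (-(2 * r * t / b)) * -(2 * r / b)) t :=
    (((hasDerivAt_id' t).const_mul (2 * r)).div_const b).fun_neg.exp.congr_deriv (by ring)
  have hsum : HasDerivAt (fun t ↦ b + t) 1 t := (hasDerivAt_id' t).const_add b
  refine (((hasDerivAt_const t 1).div hsum hbt).sub
    (((hasDerivAt_id' t).fun_mul hexp).div (hsum.fun_pow 2) (pow_ne_zero 2 hbt))).congr_deriv ?_
  field_simp
  ring

theorem deriv_f_neg {b t : ℝ} (r : ℝ) (hb : 0 < b) (hbt : 0 < b + t) : deriv (f b r) t < 0 := by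
  rw [(hasDerivAt_f r hb.ne' hbt.ne').deriv]
  refine div_neg_of_neg_of_pos ?_ (by positivity)
  have hfirst := mul_nonpos_of_nonpos_of_nonneg
    (sub_nonpos.2 (add_one_mul_exp_neg_le_one (2 * r * t / b))) hbt.le
  have hsecond : 0 < 2 * b * exp (-(2 * r * t / b)) := by positivity
  linarith

theorem f_strictAntiOn {b : ℝ} (r : ℝ) (hb : 0 < b) : StrictAntiOn (f b r) (Set.Ioi 0) := by
  refine strictAntiOn_of_deriv_neg (convex_Ioi 0) (fun t ht ↦ ?_) (fun t ht ↦ ?_)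
  · exact (hasDerivAt_f r hb.ne' (add_pos hb ht).ne').continuousAt.continuousWithinAt
  · rw [interior_Ioi] at ht
    exact deriv_f_neg r hb (add_pos hb ht)

theorem f_le_one_div {b r t : ℝ} (ht : 0 ≤ t) : f b r t ≤ 1 / (b + t) :=
  sub_le_self _ (by positivity)

theorem f_nonneg {b r t : ℝ} (hb : 0 < b) (hr : 0 ≤ r) (ht : 0 ≤ t) : 0 ≤ f b r t := by
  have hexp_le : exp (-(2 * r * t / b)) ≤ 1 := exp_le_one_iff.2 (neg_nonpos.2 (by positivity))
  rw [f, sub_nonneg]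
  calc t * exp (-(2 * r * t / b)) / (b + t) ^ 2 ≤ (b + t) / (b + t) ^ 2 := by
        gcongr
        exact (mul_le_of_le_one_right ht hexp_le).trans (le_add_of_nonneg_left hb.le)
    _ = 1 / (b + t) := by field_simp

theorem tendsto_f_atTop {b r : ℝ} (hb : 0 < b) (hr : 0 ≤ r) : Tendsto (f b r) atTop (nhds 0) := by
  have h := (tendsto_atTop_add_const_left atTop b tendsto_id).inv_tendsto_atTop
  refine tendsto_of_tendsto_of_tendsto_of_le_of_le' tendsto_const_nhds h ?_ ?_
  · filter_upwards [eventually_ge_atTop 0] with t ht using f_nonneg hb hr ht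
  · filter_upwards [eventually_ge_atTop 0] with t ht using (f_le_one_div ht).trans_eq (one_div _)

theorem f_antitone_nonneg (b r : ℝ) (hb : 0 < b) (hr : 0 < r) :
    AntitoneOn (f b r) (Set.Ioi (0:ℝ)) ∧
    (∀ t, 0 < t → 0 ≤ f b r t) ∧
    Tendsto (f b r) atTop (nhds 0) :=
  ⟨(f_strictAntiOn r hb).antitoneOn, fun _ ht ↦ f_nonneg hb hr.le ht.le, tendsto_f_atTop hb hr.le⟩
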